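/- arXiv:2412.04819 — 3 statements merged into one kernel-verified Lean document; each statement's English description precedes it below -/
import Mathlib

section
/- For every θ ∈ [−π, π], |cos(e^{iθ})| ≥ cos(1). -/
open Complex Metric

noncomputable def phiNC (z : ℂ) : ℂ := (1 + z) / Complex.cos z

def Subord (f g : ℂ → ℂ) : Prop :=
  ∃ ω : ℂ → ℂ, AnalyticOnNhd ℂ ω (ball 0 1) ∧ ω 0 = 0 ∧
    (∀ z ∈ ball (0:ℂ) 1, ω z ∈ ball (0:ℂ) 1) ∧
    ∀ z ∈ ball (0:ℂ) 1, f z = g (ω z)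

def MemSnc (f : ℂ → ℂ) : Prop :=
  AnalyticOnNhd ℂ f (ball 0 1) ∧ f 0 = 0 ∧ deriv f 0 = 1 ∧
  Subord (fun z => z * deriv f z / f z) phiNC

def HasCoeffs (f : ℂ → ℂ) (a : ℕ → ℂ) : Prop :=
  a 0 = 0 ∧ a 1 = 1 ∧ ∀ z ∈ ball (0:ℂ) 1, HasSum (fun n => a n * z ^ n) (f z)

/-!
Writing `z = x + iy`, `Re (cos z) = cos x · cosh y ≥ cos x`, since `cosh y ≥ 1` and
`cos x ≥ 0` for `|x| ≤ π/2`. On the unit circle `|x| ≤ 1`, so `|cos z| ≥ Re (cos z) ≥ cos 1`.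
-/

theorem Complex.cos_re (z : ℂ) : (cos z).re = Real.cos z.re * Real.cosh z.im := by
  rw [cos_eq]
  simp [← ofReal_cos, ← ofReal_sin, ← ofReal_cosh, ← ofReal_sinh]

theorem Complex.cos_re_le_re_cos {z : ℂ} (hz : |z.re| ≤ Real.pi / 2) :
    Real.cos z.re ≤ (cos z).re := by
  have hcos : 0 ≤ Real.cos z.re := Real.cos_nonneg_of_mem_Icc (abs_le.mp hz)
  rw [cos_re]
  exact le_mul_of_one_le_right hcos (Real.one_le_cosh z.im)

theorem Complex.cos_one_le_norm_cos {z : ℂ} (hz : |z.re| ≤ 1) : Real.cos 1 ≤ ‖cos z‖ :=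
  calc Real.cos 1 ≤ Real.cos |z.re| :=
        Real.cos_le_cos_of_nonneg_of_le_pi (abs_nonneg _) (by linarith [Real.pi_gt_three]) hz
    _ = Real.cos z.re := Real.cos_abs _
    _ ≤ (cos z).re := cos_re_le_re_cos (by linarith [Real.pi_gt_three])
    _ ≤ ‖cos z‖ := re_le_norm _

theorem stmt10_general (θ : ℝ) :
    Real.cos 1 ≤ ‖Complex.cos (Complex.exp (θ * Complex.I))‖ :=
  cos_one_le_norm_cos <| by
    rw [exp_ofReal_mul_I_re]
    exact Real.abs_cos_le_one θ

theorem stmt10 (θ : ℝ) (hθ : θ ∈ Set.Icc (-Real.pi) Real.pi) :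
    Real.cos 1 ≤ ‖Complex.cos (Complex.exp (θ * Complex.I))‖ :=
  stmt10_general θ
end

section
/- For every z in the closed unit disc, Re((1+z)/cos z) ≥ 0, and for |z| = r < 1, (1−r)/cos r ≤ Re((1+z)/cos z) ≤ (1+r)/cos r. -/
open Complex Metric

/-!
Write `z = x + y i`. Then `|cos z|² = cos² x + sinh² y` and
`Re φ(z) · |cos z|² = (1 + x) cos x cosh y - y sin x sinh y`; the upper bound only needs
`|cos z| ≥ cos x ≥ cos r`. The lower bound
`(1 - r)(cos² x + sinh² y) ≤ cos r · ((1 + x) cos x cosh y - y sin x sinh y)` for `|z| = r` is an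
equality at `z = -r`, so on the side `x ≤ 0` the factor `cos r` has to be expanded as
`cos a cos d - sin a sin d`, where `a = |x|`, `d = r - a` and `y² = d (2a + d)`. Low-order Taylor
bounds for `cos`, `sin`, `cosh`, `sinh` then reduce both sides `x ≤ 0` and `x ≥ 0` to polynomial
inequalities in `a, d` on the simplex `a, d ≥ 0, a + d ≤ 1`.
-/

-- The two polynomial inequalities below have nonnegative coefficients in the Bernstein basis of
-- the simplex `a + d + e = 1`, which is why products of cubic monomials in `a, d, e` certify them.
lemma phiNC_poly_left_nonneg {a d e : ℝ} (ha : 0 ≤ a) (hd : 0 ≤ d) (he : 0 ≤ e)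
    (h : a + d + e = 1) :
    0 ≤ (1 - a ^ 2) * (1 - (1 - a) * d / 2) - a * (1 - a) * (1 + d * (2 * a + d))
      + (1 - (a + d) ^ 2 / 2) * (a - a ^ 3 / 6) * (2 * a + d)
      - e * (2 * a + d) * (1 + d * (2 * a + d)) := by
  obtain rfl : e = 1 - a - d := by linarith
  nlinarith [pow_nonneg ha 3, pow_nonneg hd 3, pow_nonneg he 3, mul_nonneg (mul_nonneg ha hd) he,
    mul_nonneg (pow_nonneg ha 2) hd, mul_nonneg (pow_nonneg ha 2) he,
    mul_nonneg (pow_nonneg hd 2) ha, mul_nonneg (pow_nonneg hd 2) he,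
    mul_nonneg (pow_nonneg he 2) ha, mul_nonneg (pow_nonneg he 2) hd]

lemma phiNC_poly_right_le {a d e : ℝ} (ha : 0 ≤ a) (hd : 0 ≤ d) (he : 0 ≤ e)
    (h : a + d + e = 1) :
    e * (1 + d * (2 * a + d) + (d * (2 * a + d)) ^ 2) ≤
      (1 - (a + d) ^ 2 / 2) *
        ((1 + a) * (1 - a ^ 2 / 2) - a * (d * (2 * a + d) + (d * (2 * a + d)) ^ 2)) := by
  obtain rfl : e = 1 - a - d := by linarith
  nlinarith [pow_nonneg ha 3, pow_nonneg hd 3, pow_nonneg he 3, mul_nonneg (mul_nonneg ha hd) he,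
    mul_nonneg (pow_nonneg ha 2) hd, mul_nonneg (pow_nonneg ha 2) he,
    mul_nonneg (pow_nonneg hd 2) ha, mul_nonneg (pow_nonneg hd 2) he,
    mul_nonneg (pow_nonneg he 2) ha, mul_nonneg (pow_nonneg he 2) hd]

lemma phiNC_poly_num_nonneg {a t : ℝ} (ha : 0 ≤ a) (ht : 0 ≤ t) (h : a ^ 2 + t ≤ 1) :
    0 ≤ (1 + a) * (1 - a ^ 2 / 2) - a * (t + t ^ 2) := by
  have h' := sub_nonneg.2 h
  nlinarith [mul_nonneg ha ht, mul_nonneg (mul_nonneg ha ht) ht, mul_nonneg ha h',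
    mul_nonneg (mul_nonneg ha ha) h', mul_nonneg (mul_nonneg ha ht) h']

namespace Real

lemma abs_exp_sub_quadratic_le {t : ℝ} (ht : |t| ≤ 1) :
    |exp t - (1 + t + t ^ 2 / 2)| ≤ 2 / 9 * |t| ^ 3 := by
  have h := exp_bound ht (n := 3) (by norm_num)
  norm_num [Finset.sum_range_succ, Nat.factorial] at h
  linarith

lemma cosh_le_one_add_sq {y : ℝ} (hy : y ^ 2 ≤ 1) : cosh y ≤ 1 + y ^ 2 := by
  have hy1 : |y| ≤ 1 := (sq_le_one_iff_abs_le_one y).1 hy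
  have h₁ := (abs_le.1 (abs_exp_sub_quadratic_le hy1)).2
  have h₂ := (abs_le.1 (abs_exp_sub_quadratic_le (t := -y) (by rwa [abs_neg]))).2
  rw [abs_neg] at h₂
  have : |y| ^ 3 ≤ y ^ 2 := by
    rw [← sq_abs y]; nlinarith [abs_nonneg y]
  rw [cosh_eq]; nlinarith

lemma abs_sinh_le {y : ℝ} (hy : y ^ 2 ≤ 1) : |sinh y| ≤ |y| * (1 + 2 / 9 * y ^ 2) := by
  have hy1 : |y| ≤ 1 := (sq_le_one_iff_abs_le_one y).1 hy
  have h₁ := abs_le.1 (abs_exp_sub_quadratic_le hy1)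
  have h₂ := abs_le.1 (abs_exp_sub_quadratic_le (t := -y) (by rwa [abs_neg]))
  rw [abs_neg] at h₂
  have : |y| ^ 3 = |y| * y ^ 2 := by rw [← sq_abs y]; ring
  rw [sinh_eq, abs_le]
  constructor <;> cases abs_cases y <;> nlinarith

lemma sinh_sq_le {y : ℝ} (hy : y ^ 2 ≤ 1) : sinh y ^ 2 ≤ y ^ 2 + y ^ 4 := by
  calc sinh y ^ 2 = |sinh y| ^ 2 := (sq_abs _).symm
    _ ≤ (|y| * (1 + 2 / 9 * y ^ 2)) ^ 2 := pow_le_pow_left₀ (abs_nonneg _) (abs_sinh_le hy) 2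
    _ = y ^ 2 * (1 + 2 / 9 * y ^ 2) ^ 2 := by rw [mul_pow, sq_abs]
    _ ≤ y ^ 2 + y ^ 4 := by nlinarith [mul_nonneg (sq_nonneg (y ^ 2)) (sub_nonneg.2 hy)]

lemma mul_sinh_le {y : ℝ} (hy : y ^ 2 ≤ 1) : y * sinh y ≤ y ^ 2 + y ^ 4 := by
  calc y * sinh y ≤ |y| * |sinh y| := by rw [← abs_mul]; exact le_abs_self _
    _ ≤ |y| * (|y| * (1 + 2 / 9 * y ^ 2)) :=
      mul_le_mul_of_nonneg_left (abs_sinh_le hy) (abs_nonneg y)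
    _ = y ^ 2 * (1 + 2 / 9 * y ^ 2) := by rw [← mul_assoc, ← sq, sq_abs]
    _ ≤ y ^ 2 + y ^ 4 := by nlinarith [sq_nonneg y]

lemma sq_le_mul_sinh (y : ℝ) : y ^ 2 ≤ y * sinh y := by
  rcases le_total 0 y with hy | hy
  · nlinarith [self_le_sinh_iff.2 hy]
  · nlinarith [sinh_le_self_iff.2 hy]

lemma cos_pos_of_sq_le_one {x : ℝ} (hx : x ^ 2 ≤ 1) : 0 < cos x := by
  linarith [one_sub_sq_div_two_le_cos (x := x)]

lemma phiNC_num_ge_of_nonneg {a y : ℝ} (ha : 0 ≤ a) (h : a ^ 2 + y ^ 2 ≤ 1) :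
    (1 + a) * (1 - a ^ 2 / 2) - a * (y ^ 2 + y ^ 4) ≤
      (1 + a) * (cos a * cosh y) - y * (sin a * sinh y) := by
  have hcos : 1 - a ^ 2 / 2 ≤ cos a * cosh y := by
    nlinarith [one_sub_sq_div_two_le_cos (x := a), cos_pos_of_sq_le_one (x := a) (by nlinarith),
      one_le_cosh y]
  have hsin : y * (sin a * sinh y) ≤ a * (y ^ 2 + y ^ 4) := by
    rw [mul_left_comm]
    exact mul_le_mul (sin_le ha) (mul_sinh_le (by nlinarith))
      (le_trans (sq_nonneg y) (sq_le_mul_sinh y)) ha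
  nlinarith

lemma phiNC_num_nonneg {x y : ℝ} (h : x ^ 2 + y ^ 2 ≤ 1) :
    0 ≤ (1 + x) * (cos x * cosh y) - y * (sin x * sinh y) := by
  rcases le_total 0 x with hx | hx
  · exact (phiNC_poly_num_nonneg hx (sq_nonneg y) h).trans
      ((phiNC_num_ge_of_nonneg hx h).trans_eq' (by ring))
  · have hsin : sin x ≤ 0 := sin_nonpos_of_nonpos_of_neg_pi_le hx (by nlinarith [pi_gt_three])
    have h1x : 0 ≤ 1 + x := by nlinarith
    have hcos := cos_pos_of_sq_le_one (x := x) (by nlinarith)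
    nlinarith [mul_nonneg h1x (mul_nonneg hcos.le (cosh_pos y).le),
      mul_nonneg (neg_nonneg.2 hsin) (le_trans (sq_nonneg y) (sq_le_mul_sinh y))]

lemma phiNC_bound_left {a d y : ℝ} (ha : 0 ≤ a) (hd : 0 ≤ d) (hr : a + d ≤ 1)
    (hy : y ^ 2 = d * (2 * a + d)) :
    (1 - (a + d)) * (cos a ^ 2 + sinh y ^ 2) ≤
      cos (a + d) * ((1 - a) * (cos a * cosh y) + y * (sin a * sinh y)) := by
  have hy1 : y ^ 2 ≤ 1 := by nlinarith
  have hcos_d : 0 ≤ cos d := (cos_pos_of_sq_le_one (by nlinarith)).le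
  have hcos_r : 0 ≤ cos (a + d) := (cos_pos_of_sq_le_one (by nlinarith)).le
  have hsin_a : 0 ≤ sin a := sin_nonneg_of_nonneg_of_le_pi ha (by linarith [pi_gt_three])
  have hsin_d : 0 ≤ sin d := sin_nonneg_of_nonneg_of_le_pi hd (by linarith [pi_gt_three])
  have hcos_add : cos (a + d) * ((1 - a) * (cos a * cosh y)) =
      (1 - a) * cos a ^ 2 * (cos d * cosh y) - (1 - a) * (cos a * sin a * (sin d * cosh y)) := by
    rw [cos_add]; ring
  have h₁ : 1 - d ^ 2 / 2 ≤ cos d * cosh y := by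
    nlinarith [one_sub_sq_div_two_le_cos (x := d), one_le_cosh y]
  have h₂ : cos a * sin a * (sin d * cosh y) ≤ a * (d * (1 + d * (2 * a + d))) := by
    rw [← hy]
    refine mul_le_mul ?_ ?_ (mul_nonneg hsin_d (by positivity)) ha
    · nlinarith [cos_le_one a, sin_le ha]
    · exact mul_le_mul (sin_le hd) (cosh_le_one_add_sq hy1) (by positivity) hd
  have h₃ : (1 - (a + d) ^ 2 / 2) * (a - a ^ 3 / 6) * (d * (2 * a + d)) ≤
      cos (a + d) * sin a * (y * sinh y) := by
    rw [← hy]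
    refine mul_le_mul (mul_le_mul one_sub_sq_div_two_le_cos (sin_ge_sub_cube ha) ?_ hcos_r)
      (sq_le_mul_sinh y) (sq_nonneg y) (mul_nonneg hcos_r hsin_a)
    nlinarith [mul_le_mul_of_nonneg_left (show a ^ 2 ≤ 1 by nlinarith) ha]
  have h₄ : sinh y ^ 2 ≤ d * (2 * a + d) + (d * (2 * a + d)) ^ 2 := by
    have := sinh_sq_le hy1
    rwa [show y ^ 4 = (y ^ 2) ^ 2 by ring, hy] at this
  have h₅ : 1 - a ^ 2 ≤ cos a ^ 2 := by nlinarith [sin_sq_le_sq (x := a), sin_sq_add_cos_sq a]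
  have h1a : 0 ≤ 1 - a := by linarith
  linarith [mul_le_mul_of_nonneg_left h₁ (mul_nonneg h1a (sq_nonneg (cos a))),
    mul_le_mul_of_nonneg_left h₂ h1a, mul_le_mul_of_nonneg_left h₄ (sub_nonneg.2 hr),
    mul_le_mul_of_nonneg_left h₅ (mul_nonneg hd (by nlinarith : (0 : ℝ) ≤ 1 - (1 - a) * d / 2)),
    mul_nonneg hd (phiNC_poly_left_nonneg ha hd (sub_nonneg.2 hr) (by ring))]

lemma phiNC_bound_right {a d y : ℝ} (ha : 0 ≤ a) (hd : 0 ≤ d) (hr : a + d ≤ 1)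
    (hy : y ^ 2 = d * (2 * a + d)) :
    (1 - (a + d)) * (cos a ^ 2 + sinh y ^ 2) ≤
      cos (a + d) * ((1 + a) * (cos a * cosh y) - y * (sin a * sinh y)) := by
  have hay : a ^ 2 + y ^ 2 ≤ 1 := by nlinarith
  have hnum := phiNC_num_ge_of_nonneg ha hay
  rw [show y ^ 4 = (y ^ 2) ^ 2 by ring, hy] at hnum
  have hcos := one_sub_sq_div_two_le_cos (x := a + d)
  have hcos_num := mul_le_mul hcos hnum
    (phiNC_poly_num_nonneg ha (by positivity) (by rw [← hy]; exact hay)) (by nlinarith)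
  have hsinh := sinh_sq_le (y := y) (by nlinarith)
  rw [show y ^ 4 = (y ^ 2) ^ 2 by ring, hy] at hsinh
  nlinarith [cos_sq_le_one a, phiNC_poly_right_le ha hd (sub_nonneg.2 hr) (by ring)]

lemma phiNC_bound {x y r : ℝ} (hr0 : 0 ≤ r) (hr : r ≤ 1) (h : x ^ 2 + y ^ 2 = r ^ 2) :
    (1 - r) * (cos x ^ 2 + sinh y ^ 2) ≤
      cos r * ((1 + x) * (cos x * cosh y) - y * (sin x * sinh y)) := by
  have hx := abs_le.1 (abs_le_of_sq_le_sq (by nlinarith) hr0 : |x| ≤ r)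
  rcases le_total 0 x with hx0 | hx0
  · have := phiNC_bound_right hx0 (d := r - x) (y := y) (by linarith) (by linarith)
      (by linear_combination h)
    rwa [add_sub_cancel] at this
  · have := phiNC_bound_left (neg_nonneg.2 hx0) (d := r + x) (y := y) (by linarith)
      (by linarith) (by linear_combination h)
    rw [show -x + (r + x) = r by ring, cos_neg, sin_neg] at this
    linarith

end Real

namespace Complex

lemma re_cos (z : ℂ) : (cos z).re = Real.cos z.re * Real.cosh z.im := by
  conv_lhs => rw [← re_add_im z, cos_add_mul_I]
  simp [← ofReal_cos, ← ofReal_cosh, ← ofReal_sin, ← ofReal_sinh]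

lemma im_cos (z : ℂ) : (cos z).im = -(Real.sin z.re * Real.sinh z.im) := by
  conv_lhs => rw [← re_add_im z, cos_add_mul_I]
  simp [← ofReal_cos, ← ofReal_cosh, ← ofReal_sin, ← ofReal_sinh]

lemma normSq_cos (z : ℂ) : normSq (cos z) = Real.cos z.re ^ 2 + Real.sinh z.im ^ 2 := by
  rw [normSq_apply, re_cos, im_cos]
  nlinarith [Real.sin_sq_add_cos_sq z.re, Real.cosh_sq z.im]

lemma cos_le_norm_cos {z : ℂ} {r : ℝ} (hz : ‖z‖ ≤ r) (hr : r ≤ Real.pi) :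
    Real.cos r ≤ ‖cos z‖ := by
  have hre : Real.cos r ≤ Real.cos z.re := by
    rw [← Real.cos_abs z.re]
    exact Real.cos_le_cos_of_nonneg_of_le_pi (abs_nonneg _) hr ((abs_re_le_norm z).trans hz)
  have hsq : Real.cos z.re ^ 2 ≤ ‖cos z‖ ^ 2 := by
    rw [Complex.sq_norm, normSq_cos]
    nlinarith [sq_nonneg (Real.sinh z.im)]
  exact hre.trans ((le_abs_self _).trans (abs_le_of_sq_le_sq hsq (norm_nonneg _)))

lemma sq_re_add_sq_im (z : ℂ) : z.re ^ 2 + z.im ^ 2 = ‖z‖ ^ 2 := by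
  rw [Complex.sq_norm, normSq_apply]; ring

end Complex

lemma phiNC_re (z : ℂ) :
    (phiNC z).re = ((1 + z.re) * (Real.cos z.re * Real.cosh z.im)
      - z.im * (Real.sin z.re * Real.sinh z.im)) / (Real.cos z.re ^ 2 + Real.sinh z.im ^ 2) := by
  rw [phiNC, div_re, normSq_cos, re_cos, im_cos]
  simp only [add_re, one_re, add_im, one_im, zero_add]
  ring

theorem stmt12 :
    (∀ z ∈ closedBall (0:ℂ) 1, 0 ≤ (phiNC z).re) ∧
    ∀ r : ℝ, 0 ≤ r → r < 1 → ∀ z : ℂ, ‖z‖ = r →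
      (1 - r) / Real.cos r ≤ (phiNC z).re ∧ (phiNC z).re ≤ (1 + r) / Real.cos r := by
  refine ⟨fun z hz => ?_, fun r hr0 hr1 z hz => ?_⟩
  · have h : z.re ^ 2 + z.im ^ 2 ≤ 1 := by
      rw [sq_re_add_sq_im]; nlinarith [mem_closedBall_zero_iff.1 hz, norm_nonneg z]
    rw [phiNC_re]
    exact div_nonneg (Real.phiNC_num_nonneg h) (by positivity)
  have hxy : z.re ^ 2 + z.im ^ 2 = r ^ 2 := by rw [sq_re_add_sq_im, hz]
  have hcos_r : 0 < Real.cos r := Real.cos_pos_of_sq_le_one (by nlinarith)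
  have hcos_z : Real.cos r ≤ ‖cos z‖ := cos_le_norm_cos hz.le (by linarith [Real.pi_gt_three])
  constructor
  · have hD : 0 < Real.cos z.re ^ 2 + Real.sinh z.im ^ 2 :=
      add_pos_of_pos_of_nonneg (pow_pos (Real.cos_pos_of_sq_le_one (by nlinarith)) 2) (sq_nonneg _)
    rw [phiNC_re, div_le_div_iff₀ hcos_r hD]
    linarith [Real.phiNC_bound hr0 hr1.le hxy]
  · calc (phiNC z).re ≤ ‖phiNC z‖ := re_le_norm _
      _ = ‖1 + z‖ / ‖cos z‖ := by rw [phiNC, norm_div]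
      _ ≤ (1 + r) / Real.cos r :=
        div_le_div₀ (by linarith) ((norm_add_le _ _).trans (by rw [norm_one, hz])) hcos_r hcos_z
end

section
/- The function Q(z) = (1 + z − cos z)/cos z is starlike in the unit disc: Q(0)=0, Q'(0)≠0, and Re(z Q'(z)/Q(z)) > 0 for all z ∈ 𝔻 \ {0}. -/
open Complex Metric

noncomputable def Qnc (z : ℂ) : ℂ := (1 + z - Complex.cos z) / Complex.cos z

/-!
For `z ≠ 0` in the disc, `z Q'(z) / Q(z) = N(z) / D(z)` with `N z = cos z + (1 + z) sin z`
and `D z = cos z (1 + z - cos z) / z`, and `Re (N / D)` has the sign of `Re (N * conj D)`.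
On the closed unit disc `N` and `D` lie within `21/2000` and `1/120` of their Taylor
polynomials `N₅`, `D₅` of degree 5, and `Re (N₅ * conj D₅) ≥ 3/50` there by a sums-of-squares
certificate in `Re z`, `Im z`; the approximation errors cost less than `1/20`.
-/

open ComplexConjugate

namespace Complex

theorem cos_ne_zero_of_norm_lt_pi_div_two {z : ℂ} (hz : ‖z‖ < Real.pi / 2) : cos z ≠ 0 := by
  rw [Ne, cos_eq_zero_iff]
  rintro ⟨k, rfl⟩
  have hk : (1 : ℝ) ≤ |(2 * k + 1 : ℝ)| := by
    exact_mod_cast Int.one_le_abs (by omega : 2 * k + 1 ≠ 0)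
  have hnorm : ‖((2 * k + 1) * Real.pi / 2 : ℂ)‖ = |(2 * k + 1 : ℝ)| * (Real.pi / 2) := by
    rw [show ((2 * k + 1) * Real.pi / 2 : ℂ) = ((2 * k + 1 : ℝ) * (Real.pi / 2) : ℝ) by
      push_cast; ring, norm_real, norm_mul, Real.norm_eq_abs, Real.norm_of_nonneg (by positivity)]
  rw [hnorm] at hz
  nlinarith [Real.pi_pos]

theorem cos_bound_six {x : ℂ} (hx : ‖x‖ ≤ 1) :
    ‖cos x - (1 - x ^ 2 / 2 + x ^ 4 / 24)‖ ≤ ‖x‖ ^ 6 * (7 / 4320) :=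
  calc
    ‖cos x - (1 - x ^ 2 / 2 + x ^ 4 / 24)‖ =
        ‖(exp (-x * I) - ∑ m ∈ Finset.range 6, (-x * I) ^ m / m.factorial) / 2 +
         (exp (x * I) - ∑ m ∈ Finset.range 6, (x * I) ^ m / m.factorial) / 2‖ := by
      simp [cos, field, Finset.sum_range_succ, Nat.factorial]
      grind [I_sq, two_ne_zero]
    _ ≤ ‖exp (-x * I) - ∑ m ∈ Finset.range 6, (-x * I) ^ m / m.factorial‖ / 2 +
        ‖exp (x * I) - ∑ m ∈ Finset.range 6, (x * I) ^ m / m.factorial‖ / 2 := by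
      grw [norm_add_le]
      simp
    _ ≤ ‖-x * I‖ ^ 6 * (Nat.succ 6 * (Nat.factorial 6 * (6 : ℕ) : ℝ)⁻¹) / 2 +
        ‖x * I‖ ^ 6 * (Nat.succ 6 * (Nat.factorial 6 * (6 : ℕ) : ℝ)⁻¹) / 2 := by
      grw [exp_bound (by simpa) (by simp), exp_bound (by simpa) (by simp)]
    _ = ‖x‖ ^ 6 * (7 / 4320) := by norm_num [Nat.factorial]

theorem sin_bound_seven {x : ℂ} (hx : ‖x‖ ≤ 1) :
    ‖sin x - (x - x ^ 3 / 6 + x ^ 5 / 120)‖ ≤ ‖x‖ ^ 7 / 4410 :=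
  calc
    ‖sin x - (x - x ^ 3 / 6 + x ^ 5 / 120)‖ =
        ‖(exp (-x * I) - ∑ m ∈ Finset.range 7, (-x * I) ^ m / m.factorial) * I / 2 -
         (exp (x * I) - ∑ m ∈ Finset.range 7, (x * I) ^ m / m.factorial) * I / 2‖ := by
      simp [sin, field, Finset.sum_range_succ, Nat.factorial]
      grind [I_sq, two_ne_zero]
    _ ≤ ‖exp (-x * I) - ∑ m ∈ Finset.range 7, (-x * I) ^ m / m.factorial‖ / 2 +
        ‖exp (x * I) - ∑ m ∈ Finset.range 7, (x * I) ^ m / m.factorial‖ / 2 := by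
      grw [norm_sub_le]
      simp
    _ ≤ ‖-x * I‖ ^ 7 * (Nat.succ 7 * (Nat.factorial 7 * (7 : ℕ) : ℝ)⁻¹) / 2 +
        ‖x * I‖ ^ 7 * (Nat.succ 7 * (Nat.factorial 7 * (7 : ℕ) : ℝ)⁻¹) / 2 := by
      grw [exp_bound (by simpa) (by simp), exp_bound (by simpa) (by simp)]
    _ = ‖x‖ ^ 7 / 4410 := by norm_num [Nat.factorial, mul_one_div]

theorem div_re_pos_of_mul_conj_re_pos {a b : ℂ} (h : 0 < (a * conj b).re) : 0 < (a / b).re := by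
  have hb : b ≠ 0 := by rintro rfl; simp at h
  have : (a / b).re = (a * conj b).re / normSq b := by
    simp only [div_re, mul_re, conj_re, conj_im]; ring
  rw [this]
  exact div_pos h (normSq_pos.mpr hb)

theorem abs_re_mul_conj_sub_re_mul_conj_le (a b a' b' : ℂ) :
    |(a * conj b).re - (a' * conj b').re| ≤ ‖a - a'‖ * ‖b'‖ + ‖a‖ * ‖b - b'‖ :=
  calc |(a * conj b).re - (a' * conj b').re|
      = |((a - a') * conj b' + a * conj (b - b')).re| := by
        simp only [map_sub, mul_re, conj_re, conj_im, add_re, sub_re, sub_im]; ring_nf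
    _ ≤ ‖(a - a') * conj b' + a * conj (b - b')‖ := abs_re_le_norm _
    _ ≤ ‖a - a'‖ * ‖b'‖ + ‖a‖ * ‖b - b'‖ := by
        grw [norm_add_le, norm_mul, norm_mul, norm_conj, norm_conj]

end Complex

noncomputable def qNum (z : ℂ) : ℂ := cos z + (1 + z) * sin z

noncomputable def qDen (z : ℂ) : ℂ := cos z * (1 + z - cos z) / z

noncomputable def qNumTaylor (z : ℂ) : ℂ :=
  1 + z + z ^ 2 / 2 - z ^ 3 / 6 - z ^ 4 / 8 + z ^ 5 / 120

noncomputable def qDenTaylor (z : ℂ) : ℂ :=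
  1 + z / 2 - z ^ 2 / 2 - 7 * z ^ 3 / 24 + z ^ 4 / 24 + 31 * z ^ 5 / 720

theorem hasDerivAt_Qnc {z : ℂ} (hz : cos z ≠ 0) : HasDerivAt Qnc (qNum z / cos z ^ 2) z := by
  have hP : HasDerivAt (fun w => 1 + w - cos w) (1 - -sin z) z :=
    ((hasDerivAt_id' z).const_add 1).sub (hasDerivAt_cos z)
  exact (hP.div (hasDerivAt_cos z) hz).congr_deriv (by unfold qNum; ring)

theorem deriv_Qnc_zero : deriv Qnc 0 = 1 := by
  simp [(hasDerivAt_Qnc (z := 0) (by simp)).deriv, qNum]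

theorem mul_deriv_Qnc_div_Qnc {z : ℂ} (hz : z ≠ 0) (hcos : cos z ≠ 0) :
    z * deriv Qnc z / Qnc z = qNum z / qDen z := by
  rw [(hasDerivAt_Qnc hcos).deriv, Qnc, qDen]
  field_simp

theorem norm_qNumTaylor_le {z : ℂ} (hz : ‖z‖ ≤ 1) : ‖qNumTaylor z‖ ≤ 337 / 120 := by
  have h k : ‖z‖ ^ k ≤ 1 := pow_le_one₀ (norm_nonneg z) hz
  unfold qNumTaylor
  grw [norm_add_le, norm_sub_le, norm_sub_le, norm_add_le, norm_add_le]
  simp only [norm_div, norm_pow, norm_one, RCLike.norm_ofNat]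
  linarith [h 2, h 3, h 4, h 5]

theorem norm_qDenTaylor_le {z : ℂ} (hz : ‖z‖ ≤ 1) : ‖qDenTaylor z‖ ≤ 1711 / 720 := by
  have h k : ‖z‖ ^ k ≤ 1 := pow_le_one₀ (norm_nonneg z) hz
  unfold qDenTaylor
  grw [norm_add_le, norm_add_le, norm_sub_le, norm_sub_le, norm_add_le]
  simp only [norm_div, norm_mul, norm_pow, norm_one, RCLike.norm_ofNat]
  linarith [h 2, h 3, h 4, h 5]

theorem norm_qNum_sub_qNumTaylor_le {z : ℂ} (hz : ‖z‖ ≤ 1) :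
    ‖qNum z - qNumTaylor z‖ ≤ 21 / 2000 := by
  have h k : ‖z‖ ^ k ≤ 1 := pow_le_one₀ (norm_nonneg z) hz
  have h1z : ‖1 + z‖ ≤ 2 := by grw [norm_add_le, norm_one, hz]; norm_num
  calc ‖qNum z - qNumTaylor z‖
      = ‖(cos z - (1 - z ^ 2 / 2 + z ^ 4 / 24))
          + (1 + z) * (sin z - (z - z ^ 3 / 6 + z ^ 5 / 120)) + z ^ 6 / 120‖ := by
        unfold qNum qNumTaylor; ring_nf
    _ ≤ ‖z‖ ^ 6 * (7 / 4320) + 2 * (‖z‖ ^ 7 / 4410) + ‖z‖ ^ 6 / 120 := by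
      grw [norm_add_le, norm_add_le, norm_mul, cos_bound_six hz, sin_bound_seven hz, h1z]
      simp
    _ ≤ 21 / 2000 := by linarith [h 6, h 7]

theorem norm_qNum_le {z : ℂ} (hz : ‖z‖ ≤ 1) : ‖qNum z‖ ≤ 337 / 120 + 21 / 2000 := by
  rw [← sub_add_cancel (qNum z) (qNumTaylor z)]
  grw [norm_add_le, norm_qNum_sub_qNumTaylor_le hz, norm_qNumTaylor_le hz]
  norm_num

theorem norm_qDen_sub_qDenTaylor_le {z : ℂ} (hz : ‖z‖ ≤ 1) (hz0 : z ≠ 0) :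
    ‖qDen z - qDenTaylor z‖ ≤ 1 / 120 := by
  have h k : ‖z‖ ^ k ≤ 1 := pow_le_one₀ (norm_nonneg z) hz
  set e := cos z - (1 - z ^ 2 / 2 + z ^ 4 / 24) with he
  have he' : ‖e / z‖ ≤ 7 / 4320 := by
    rw [norm_div, div_le_iff₀ (norm_pos_iff.mpr hz0)]
    grw [he, cos_bound_six hz]
    nlinarith [h 5, norm_nonneg z]
  have hP : ‖z + z ^ 2 - z ^ 4 / 12 - 1 - e‖ ≤ 31 / 10 := by
    grw [norm_sub_le, norm_sub_le, norm_sub_le, norm_add_le, he, cos_bound_six hz]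
    simp only [norm_div, norm_pow, norm_one, RCLike.norm_ofNat]
    linarith [h 2, h 4, h 6]
  calc ‖qDen z - qDenTaylor z‖
      = ‖-z ^ 5 / 720 - z ^ 7 / 576 + e / z * (z + z ^ 2 - z ^ 4 / 12 - 1 - e)‖ := by
        unfold qDen qDenTaylor; rw [he]; congr 1; field_simp; ring
    _ ≤ ‖z‖ ^ 5 / 720 + ‖z‖ ^ 7 / 576 + 7 / 4320 * (31 / 10) := by
      grw [norm_add_le, norm_sub_le, norm_mul, he', hP]
      simp
    _ ≤ 1 / 120 := by linarith [h 5, h 7]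

set_option maxHeartbeats 1000000 in
theorem three_div_fifty_le_re_qNumTaylor_mul_conj_qDenTaylor {z : ℂ} (hz : ‖z‖ ≤ 1) :
    3 / 50 ≤ (qNumTaylor z * conj (qDenTaylor z)).re := by
  obtain ⟨x, y⟩ := z
  have hdisc : 0 ≤ 1 - x ^ 2 - y ^ 2 := by
    have := (sq_le_one_iff₀ (norm_nonneg _)).mpr hz
    rw [Complex.sq_norm, normSq_mk] at this
    linarith
  have hσ₀ : 0 ≤
    (53231/102400)*(1 + (15175/53231)*y^2 + (37225/638772)*y^4 + (47950/53231)*x +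
    (21975/53231)*x*y^2 + (90275/479079)*x*y^4 + (1375/212924)*x^2 + (-925/106462)*x^2*y^2 +
    (-20575/319386)*x^3 + (35275/958158)*x^3*y^2 + (-71225/638772)*x^4 + (11285/958158)*x^5)^2 +
    (743/4096)*(y + (173/743)*y^3 + (1387/14860)*y^5 + (719/743)*x*y + (627/1486)*x*y^3 +
    (-1/743)*x^2*y + (-1379/26748)*x^2*y^3 + (50/743)*x^3*y + (847/26748)*x^4*y)^2 +
    (11033885/218034176)*((7316061/22067770)*y^2 + (14764213/66203310)*y^4 + x +
    (926731/22067770)*x*y^2 + (-18404933/99304965)*x*y^4 + (-1957397/22067770)*x^2 +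
    (-195202/2206777)*x^2*y^2 + (-6458227/33101655)*x^3 + (8516111/198609930)*x^3*y^2 +
    (1161376/6620331)*x^4 + (-130101091/993049650)*x^5)^2 + (7621104199/180779171840)*(y^2 +
    (11691648752/22863312597)*y^4 + (332355879/7621104199)*x*y^2 + (-236812316/7621104199)*x*y^4 +
    (-2088688498/7621104199)*x^2 + (-2058807450/7621104199)*x^2*y^2 + (531041354/22863312597)*x^3 +
    (15794246579/68589937791)*x^3*y^2 + (402104005/1344900741)*x^4 +
    (-44425543129/342949688955)*x^5)^2 + (325025/6086656)*((81861/325025)*y^3 + (451597/3250250)*y^5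
    + x*y + (26936/325025)*x*y^3 + (-27539/325025)*x^2*y + (991501/5850450)*x^2*y^3 +
    (64069/325025)*x^3*y + (-194399/5850450)*x^4*y)^2 +
    (13999707534387/499456684785664)*((-7865213572067/41999122603161)*y^4 +
    (2031433271336/13999707534387)*x*y^2 + (5864315952196/41999122603161)*x*y^4 + x^2 +
    (4537136259982/13999707534387)*x^2*y^2 + (11668644359698/41999122603161)*x^3 +
    (197066142298/125997367809483)*x^3*y^2 + (-11008128979889/41999122603161)*x^4 +
    (-8451478007338/125997367809483)*x^5)^2 + (58291339/1331302400)*(y^3 +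
    (1992595381/15738661530)*y^5 + (-6195186/58291339)*x*y^3 + (-23596686/58291339)*x^2*y +
    (316433759/6295464612)*x^2*y^3 + (36077137/116582678)*x^3*y + (-771062777/2098488204)*x^4*y)^2 +
    (1757200145628137/57342802060849152)*((592324945514872/5271600436884411)*y^4 + x*y^2 +
    (1360235796561491/5271600436884411)*x*y^4 + (182588868820159/1757200145628137)*x^2*y^2 +
    (1470829477192288/5271600436884411)*x^3 + (-215782642203355/4518514660186638)*x^3*y^2 +
    (-373826220768590/5271600436884411)*x^4 + (-9219308414298523/79074006553266165)*x^5)^2 +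
    (1191618333/29845165568)*((-4511806511/35748549990)*y^5 + (2025152633/9532946664)*x*y^3 + x^2*y
    + (30104509243/857965199760)*x^2*y^3 + (15177523/529608148)*x^3*y +
    (24384510413/171593039952)*x^4*y)^2 +
    (4366371217907181773/129554852336871284736)*((648411061932884708/4366371217907181773)*y^4 +
    (330780450045514765/13099113653721545319)*x*y^4 +
    (674904882171766440/4366371217907181773)*x^2*y^2 + x^3 +
    (-96511181496777656/13099113653721545319)*x^3*y^2 + (14069237999625128/4366371217907181773)*x^4
    + (-63027022200834083993/196486704805823179785)*x^5)^2 +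
    (1105998880189733444777/35769313017095633084416)*(y^4 +
    (-3550886514313029689354/49769949608538005014965)*x*y^4 +
    (-123522543215411886178/1105998880189733444777)*x^2*y^2 +
    (2644813057503688351459/49769949608538005014965)*x^3*y^2 +
    (206305055341344279156/1105998880189733444777)*x^4 +
    (-1379761676105331858742/9953989921707601002993)*x^5)^2 +
    (1375737325523/39046949535744)*((1218023167807/20636059882845)*y^5 + x*y^3 +
    (-19450396487243/123816359297070)*x^2*y^3 + (-255170504250/1375737325523)*x^3*y +
    (3472081390067/24763271859414)*x^4*y)^2 +
    (240718050130106568145885/9060342826514296379613184)*((-196135832635145134915519/10832312255854795566564825)*x*y^4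
    + x^2*y^2 + (-330241589751191492035891/10832312255854795566564825)*x^3*y^2 +
    (-23563025473237341857407/240718050130106568145885)*x^4 +
    (-2858114141753400145981402/32496936767564386699694475)*x^5)^2 +
    (772409742879175/22540080341368832)*((5191046603537759/104275315288688625)*y^5 +
    (23939068877717051/208550630577377250)*x^2*y^3 + x^3*y +
    (-795816594231661/2780675074365030)*x^4*y)^2 +
    (2745490024661889719205433/123247641666614562890693120)*((-28739504334787556823679971/219639201972951177536434640)*x*y^4
    + (3664847191334455561622377/988376408878280298913955880)*x^3*y^2 + x^4 +
    (-20763700543361443241158591/2965129226634840896741867640)*x^5)^2 +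
    (29830955329401328754987/922561253472532193280000)*(y^5 +
    (1513136877877255688434/29830955329401328754987)*x^2*y^3 +
    (1349949233229967714950/29830955329401328754987)*x^4*y)^2 +
    (22271046055566522803132481605267/728710158737778498783281391206400)*(x*y^4 +
    (3224273677036235967277858806958/22271046055566522803132481605267)*x^3*y^2 +
    (9395985105919932715759246014182/66813138166699568409397444815801)*x^5)^2 +
    (28835501632733560052638168903/989719503536745524901456691200)*(x^2*y^3 +
    (586507039800660291660835870/28835501632733560052638168903)*x^4*y)^2 +
    (874550761364260958856004623051397769/29555994304526554678128328868276256768)*(x^3*y^2 +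
    (140626670060819932622894517712348797/4372753806821304794280023115256988845)*x^5)^2 +
    (479103516539093366234714958217645/12755903186269079493365441501282304)*(x^4*y)^2 +
    (2102020014637271281591001975080018114220393/87046486020716713165622936945250163862323200)*(x^5)^2 := by
    positivity
  have hσ₁ : 0 ≤
    (1721/4096)*(1 + (1123/3442)*y^2 + (157/1721)*y^4 + (1154/1721)*x + (811/3442)*x*y^2 +
    (571/3442)*x^2 + (37/1721)*x^2*y^2 + (-521/3442)*x^3 + (-203/3442)*x^4)^2 + (689/4096)*(y +
    (168/689)*y^3 + (30/53)*x*y + (98/689)*x*y^3 + (11/1378)*x^2*y + (-103/1378)*x^3*y)^2 +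
    (1589159/14098432)*((249516/1589159)*y^2 + (7659/1589159)*y^4 + x + (206850/1589159)*x*y^2 +
    (-290640/1589159)*x^2 + (-267822/1589159)*x^2*y^2 + (-157727/1589159)*x^3 +
    (-91007/1589159)*x^4)^2 + (1115086657/26036781056)*(y^2 + (384113766/1115086657)*y^4 +
    (-204910645/1115086657)*x*y^2 + (-352096545/1115086657)*x^2 + (-294660008/1115086657)*x^2*y^2 +
    (-170442743/1115086657)*x^3 + (112939493/1115086657)*x^4)^2 + (11779/217088)*((467/23558)*y^3 +
    x*y + (1141/11779)*x*y^3 + (-3457/23558)*x^2*y + (1235/23558)*x^3*y)^2 +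
    (317141606529/9134789894144)*((-4370684224/28831055139)*y^4 + (21282672238/317141606529)*x*y^2 +
    x^2 + (46821514565/317141606529)*x^2*y^2 + (15512774758/105713868843)*x^3 +
    (12349603888/105713868843)*x^4)^2 + (95519979/2508832768)*(y^3 + (-5709962/95519979)*x*y^3 +
    (-17881907/95519979)*x^2*y + (7549999/95519979)*x^3*y)^2 +
    (41567807960617/1299012020342784)*((2622486153661/41567807960617)*y^4 + x*y^2 +
    (5068862824514/41567807960617)*x^2*y^2 + (26015555200281/83135615921234)*x^3 +
    (-6182057447916/41567807960617)*x^4)^2 +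
    (53951556323/1564999335936)*((5590469924/53951556323)*x*y^3 + x^2*y +
    (23382239/7707365189)*x^3*y)^2 +
    (30598149083651705/681046965626748928)*((591839911469100/6119629816730341)*y^4 +
    (2362715023982668/30598149083651705)*x^2*y^2 + x^3 +
    (-2595480500214876/30598149083651705)*x^4)^2 + (1313767566456180227/50132007458654953472)*(y^4 +
    (-100759501164569948/1313767566456180227)*x^2*y^2 +
    (24778115925892108/1313767566456180227)*x^4)^2 + (2910744973947/110492787349504)*(x*y^3 +
    (-1144963591667/11642979895788)*x^3*y)^2 +
    (80932022258191023903/3363244970127821381120)*(x^2*y^2 +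
    (-30203122414743941331/215818726021842730408)*x^4)^2 +
    (2201005743622273/95379291306295296)*(x^3*y)^2 +
    (23538850565380567127203/883993501785467823751168)*(x^4)^2 := by positivity
  simp only [qNumTaylor, qDenTaylor, pow_succ, pow_zero, one_mul, mul_re, mul_im, add_re,
    add_im, sub_re, sub_im, div_ofNat_re, div_ofNat_im, conj_re, conj_im, one_re, one_im,
    re_ofNat, im_ofNat]
  linear_combination hσ₀ + mul_nonneg hdisc hσ₁

theorem re_qNum_mul_conj_qDen_pos {z : ℂ} (hz : ‖z‖ ≤ 1) (hz0 : z ≠ 0) :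
    0 < (qNum z * conj (qDen z)).re := by
  have hTaylor := three_div_fifty_le_re_qNumTaylor_mul_conj_qDenTaylor hz
  have hclose := (abs_le.mp (abs_re_mul_conj_sub_re_mul_conj_le
    (qNum z) (qDen z) (qNumTaylor z) (qDenTaylor z))).1
  have herr :
      ‖qNum z - qNumTaylor z‖ * ‖qDenTaylor z‖ + ‖qNum z‖ * ‖qDen z - qDenTaylor z‖ ≤
      21 / 2000 * (1711 / 720) + (337 / 120 + 21 / 2000) * (1 / 120) := by
    grw [norm_qNum_sub_qNumTaylor_le hz, norm_qDenTaylor_le hz, norm_qNum_le hz,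
      norm_qDen_sub_qDenTaylor_le hz hz0]
  linarith

theorem stmt19 :
    Qnc 0 = 0 ∧ deriv Qnc 0 ≠ 0 ∧
    ∀ z ∈ ball (0:ℂ) 1, z ≠ 0 → 0 < (z * deriv Qnc z / Qnc z).re := by
  refine ⟨by simp [Qnc], by simp [deriv_Qnc_zero], fun z hz hz0 => ?_⟩
  have hz1 : ‖z‖ ≤ 1 := (mem_ball_zero_iff.mp hz).le
  have hcos : cos z ≠ 0 :=
    cos_ne_zero_of_norm_lt_pi_div_two (by linarith [Real.pi_gt_three])
  rw [mul_deriv_Qnc_div_Qnc hz0 hcos]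
  exact div_re_pos_of_mul_conj_re_pos (re_qNum_mul_conj_qDen_pos hz1 hz0)
end
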